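/- arXiv:1909.07534 — 3 statements merged into one kernel-verified Lean document; each statement's English description precedes it below -/
import Mathlib

section
/- Let A₁ and A₂ be Hermitian complex square matrices with A₁² = I and A₂² = I. Then for every matrix M of the appropriate size, i·((A₁⊗A₂)M − M(A₁⊗A₂)) = (1/8) · Σ_{α₁,α₂∈{±1}} α₁α₂ · [ ((I+α₁A₁)⊗(I+iα₂A₂)) M ((I+α₁A₁)⊗(I+iα₂A₂))† + ((I+iα₁A₁)⊗(I+α₂A₂)) M ((I+iα₁A₁)⊗(I+α₂A₂))† ]. -/
/-!
Writing `A₁ ⊗ A₂ = (A₁ ⊗ 1)(1 ⊗ A₂)`, every sandwich is `(1 + a X)(1 + b Y) M (1 + a̅ X)(1 + b̅ Y)`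
with `X = A₁ ⊗ 1`, `Y = 1 ⊗ A₂`. Summing against `α₁α₂` over the four sign pairs extracts four times
the `α₁α₂`-coefficient of each expansion, which is `i([XY, M] - XMY + YMX)` for the first family and
`i([XY, M] + XMY - YMX)` for the second; the cross terms cancel and the total is `8i[XY, M]`.
-/

open Matrix Kronecker

theorem sum_signs_smul_sandwich_eq_smul_commutator {R : Type*} [Ring R] [Algebra ℂ R]
    (X Y M : R) :
    ∑ α₁ ∈ ({1, -1} : Finset ℂ), ∑ α₂ ∈ ({1, -1} : Finset ℂ),
      (α₁ * α₂) •
        ((1 + α₁ • X) * (1 + (Complex.I * α₂) • Y) * M *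
            ((1 + α₁ • X) * (1 - (Complex.I * α₂) • Y)) +
          (1 + (Complex.I * α₁) • X) * (1 + α₂ • Y) * M *
            ((1 - (Complex.I * α₁) • X) * (1 + α₂ • Y))) =
      (8 * Complex.I) • (X * Y * M - M * (X * Y)) := by
  simp only [Finset.sum_pair (show (1 : ℂ) ≠ -1 by norm_num)]
  simp only [mul_add, add_mul, mul_sub, sub_mul, mul_smul_comm, smul_mul_assoc, smul_add,
    smul_sub, smul_smul, one_mul, mul_one, mul_assoc]
  match_scalars <;> ring

section Kronecker

variable {R m n : Type*} [CommSemiring R] [Fintype m] [Fintype n] [DecidableEq m] [DecidableEq n]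

theorem one_add_smul_kronecker_one_add_smul (A : Matrix m m R) (B : Matrix n n R) (a b : R) :
    (1 + a • A) ⊗ₖ (1 + b • B) = (1 + a • (A ⊗ₖ 1)) * (1 + b • ((1 : Matrix m m R) ⊗ₖ B)) := by
  rw [← mul_one (1 + a • A), ← one_mul (1 + b • B), mul_kronecker_mul]
  simp only [add_kronecker, kronecker_add, smul_kronecker, kronecker_smul, one_kronecker_one]

theorem conjTranspose_one_add_smul_kronecker_one_add_smul [StarRing R] {A : Matrix m m R} {B : Matrix n n R}
    (hA : A.IsHermitian) (hB : B.IsHermitian) (a b : R) :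
    ((1 + a • A) ⊗ₖ (1 + b • B))ᴴ =
      (1 + star a • (A ⊗ₖ 1)) * (1 + star b • ((1 : Matrix m m R) ⊗ₖ B)) := by
  rw [conjTranspose_kronecker]
  simp only [conjTranspose_add, conjTranspose_one, conjTranspose_smul, hA.eq, hB.eq]
  exact one_add_smul_kronecker_one_add_smul A B (star a) (star b)

end Kronecker

theorem stmt_5_general (n m : ℕ)
    (A₁ : Matrix (Fin n) (Fin n) ℂ) (A₂ : Matrix (Fin m) (Fin m) ℂ)
    (hH₁ : A₁.IsHermitian) (hH₂ : A₂.IsHermitian)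
    (M : Matrix (Fin n × Fin m) (Fin n × Fin m) ℂ) :
    let T : Matrix (Fin n × Fin m) (Fin n × Fin m) ℂ := A₁ ⊗ₖ A₂
    Complex.I • (T * M - M * T) =
      ((8 : ℂ))⁻¹ • ∑ α₁ ∈ ({1, -1} : Finset ℂ), ∑ α₂ ∈ ({1, -1} : Finset ℂ),
        (α₁ * α₂) •
          ((((1 + α₁ • A₁) ⊗ₖ (1 + (Complex.I * α₂) • A₂)) * M *
              (((1 + α₁ • A₁) ⊗ₖ (1 + (Complex.I * α₂) • A₂)))ᴴ) +
            (((1 + (Complex.I * α₁) • A₁) ⊗ₖ (1 + α₂ • A₂)) * M *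
              (((1 + (Complex.I * α₁) • A₁) ⊗ₖ (1 + α₂ • A₂)))ᴴ)) := by
  intro T
  have hT : T = (A₁ ⊗ₖ 1) * ((1 : Matrix (Fin n) (Fin n) ℂ) ⊗ₖ A₂) := by
    rw [← mul_kronecker_mul, mul_one, one_mul]
  have star_sign : ∀ α ∈ ({1, -1} : Finset ℂ), star α = α := by
    simp
  rw [hT, eq_inv_smul_iff₀ (by norm_num), smul_smul, ← sum_signs_smul_sandwich_eq_smul_commutator]
  symm
  refine Finset.sum_congr rfl fun α₁ hα₁ => Finset.sum_congr rfl fun α₂ hα₂ => ?_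
  rw [conjTranspose_one_add_smul_kronecker_one_add_smul hH₁ hH₂,
    conjTranspose_one_add_smul_kronecker_one_add_smul hH₁ hH₂]
  simp only [one_add_smul_kronecker_one_add_smul, star_mul', Complex.star_def, Complex.conj_I,
    star_sign _ hα₁, star_sign _ hα₂, neg_mul, neg_smul, ← sub_eq_add_neg]

theorem stmt_5 (n m : ℕ)
    (A₁ : Matrix (Fin n) (Fin n) ℂ) (A₂ : Matrix (Fin m) (Fin m) ℂ)
    (hA₁ : A₁ * A₁ = 1) (hA₂ : A₂ * A₂ = 1)
    (hH₁ : A₁.IsHermitian) (hH₂ : A₂.IsHermitian)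
    (M : Matrix (Fin n × Fin m) (Fin n × Fin m) ℂ) :
    let T : Matrix (Fin n × Fin m) (Fin n × Fin m) ℂ := A₁ ⊗ₖ A₂
    Complex.I • (T * M - M * T) =
      ((8 : ℂ))⁻¹ • ∑ α₁ ∈ ({1, -1} : Finset ℂ), ∑ α₂ ∈ ({1, -1} : Finset ℂ),
        (α₁ * α₂) •
          ((((1 + α₁ • A₁) ⊗ₖ (1 + (Complex.I * α₂) • A₂)) * M *
              (((1 + α₁ • A₁) ⊗ₖ (1 + (Complex.I * α₂) • A₂)))ᴴ) +
            (((1 + (Complex.I * α₁) • A₁) ⊗ₖ (1 + α₂ • A₂)) * M *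
              (((1 + (Complex.I * α₁) • A₁) ⊗ₖ (1 + α₂ • A₂)))ᴴ)) :=
  stmt_5_general n m A₁ A₂ hH₁ hH₂ M
end

section
/- Let A₁ and A₂ be Hermitian complex square matrices with A₁² = I and A₂² = I, and let θ be real. Then for every matrix M, exp(iθ A₁⊗A₂) M exp(−iθ A₁⊗A₂) = cos²θ·M + sin²θ·(A₁⊗A₂)M(A₁⊗A₂) + (cosθ·sinθ/8)·Σ_{α₁,α₂∈{±1}} α₁α₂ [ ((I+α₁A₁)⊗(I+iα₂A₂)) M ((I+α₁A₁)⊗(I+iα₂A₂))† + ((I+iα₁A₁)⊗(I+α₂A₂)) M ((I+iα₁A₁)⊗(I+α₂A₂))† ]. -/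
/-!
Since `T = A₁ ⊗ A₂` squares to the identity, its exponential series splits into even and odd
parts, `exp (iθT) = cos θ + i sin θ T`, so that conjugating `M` gives
`cos² θ M + sin² θ TMT + i cos θ sin θ (TM − MT)`. On the other side, each of the eight local
superoperators `M ↦ U M U†` with `U = (1 + a A₁) ⊗ (1 + b A₂)` is a polynomial in the signs
`α₁, α₂`, and the signed sum `∑ α₁ α₂ (⋯)` keeps exactly the terms that are odd in both signs;
these add up to `8 i (TM − MT)`.
-/

open Matrix Kronecker Complex

section InvolutiveExp

variable {𝔸 : Type*} [NormedRing 𝔸] [NormedAlgebra ℂ 𝔸] [CompleteSpace 𝔸] {T : 𝔸}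

theorem exp_smul_of_mul_self_eq_one (hT : T * T = 1) (z : ℂ) :
    NormedSpace.exp (z • T) = cosh z • 1 + sinh z • T := by
  have hpow (k : ℕ) : T ^ (2 * k) = 1 := by rw [pow_mul, sq, hT, one_pow]
  refine (NormedSpace.exp_series_hasSum_exp' (𝕂 := ℂ) (z • T)).unique
    (HasSum.even_add_odd ?_ ?_)
  · convert (hasSum_cosh z).smul_const (1 : 𝔸) using 2 with k
    rw [smul_pow, hpow, smul_smul, div_eq_inv_mul]
  · convert (hasSum_sinh z).smul_const T using 2 with k
    rw [smul_pow, pow_succ T, hpow, one_mul, smul_smul, div_eq_inv_mul]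

theorem exp_I_mul_smul_of_mul_self_eq_one (hT : T * T = 1) (z : ℂ) :
    NormedSpace.exp ((I * z) • T) = cos z • 1 + (I * sin z) • T := by
  rw [exp_smul_of_mul_self_eq_one hT, mul_comm, cosh_mul_I, sinh_mul_I, mul_comm]

theorem conj_exp_I_mul_smul_of_mul_self_eq_one (hT : T * T = 1) (z : ℂ) (M : 𝔸) :
    NormedSpace.exp ((I * z) • T) * M * NormedSpace.exp ((-(I * z)) • T) =
      cos z ^ 2 • M + sin z ^ 2 • (T * M * T) + (cos z * sin z) • (I • (T * M - M * T)) := by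
  rw [← mul_neg, exp_I_mul_smul_of_mul_self_eq_one hT, exp_I_mul_smul_of_mul_self_eq_one hT,
    cos_neg, sin_neg]
  simp only [add_mul, mul_add, smul_mul_assoc, mul_smul_comm, smul_smul, one_mul, mul_one,
    smul_sub]
  match_scalars
  · ring
  · ring
  · ring
  · linear_combination (-sin z ^ 2) * I_sq

end InvolutiveExp

namespace Matrix

variable {ι κ : Type*} [DecidableEq ι] [DecidableEq κ]

theorem one_add_smul_kronecker_one_add_smul (A : Matrix ι ι ℂ) (B : Matrix κ κ ℂ) (a b : ℂ) :
    (1 + a • A) ⊗ₖ (1 + b • B) = 1 + a • (A ⊗ₖ 1) + b • (1 ⊗ₖ B) + (a * b) • (A ⊗ₖ B) := by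
  simp only [add_kronecker, kronecker_add, smul_kronecker, kronecker_smul, one_kronecker_one]
  module

theorem IsHermitian.conjTranspose_one_add_smul_kronecker {A : Matrix ι ι ℂ} {B : Matrix κ κ ℂ}
    (hA : A.IsHermitian) (hB : B.IsHermitian) (a b : ℂ) :
    ((1 + a • A) ⊗ₖ (1 + b • B))ᴴ = (1 + star a • A) ⊗ₖ (1 + star b • B) := by
  simp only [conjTranspose_kronecker, conjTranspose_add, conjTranspose_one, conjTranspose_smul,
    hA.eq, hB.eq]

variable [Fintype ι] [Fintype κ]

theorem conj_exp_I_mul_smul_of_mul_self_eq_one {T : Matrix ι ι ℂ} (hT : T * T = 1) (z : ℂ)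
    (M : Matrix ι ι ℂ) :
    NormedSpace.exp ((I * z) • T) * M * NormedSpace.exp ((-(I * z)) • T) =
      cos z ^ 2 • M + sin z ^ 2 • (T * M * T) + (cos z * sin z) • (I • (T * M - M * T)) := by
  -- `NormedSpace.exp` only sees the topology, so any algebra norm on matrices will do.
  let _ : NormedRing (Matrix ι ι ℂ) := Matrix.linftyOpNormedRing
  let _ : NormedAlgebra ℂ (Matrix ι ι ℂ) := Matrix.linftyOpNormedAlgebra
  exact _root_.conj_exp_I_mul_smul_of_mul_self_eq_one hT z M

/-- Expanding the products, the terms `(A ⊗ 1) M (1 ⊗ B)` and `(1 ⊗ B) M (A ⊗ 1)` of the two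
families cancel, and only the ones linear in `A ⊗ B` remain. -/
theorem IsHermitian.sum_sign_mul_kronecker_twirl {A : Matrix ι ι ℂ} {B : Matrix κ κ ℂ}
    (hA : A.IsHermitian) (hB : B.IsHermitian) (M : Matrix (ι × κ) (ι × κ) ℂ) :
    ∑ α₁ ∈ ({1, -1} : Finset ℂ), ∑ α₂ ∈ ({1, -1} : Finset ℂ),
      (α₁ * α₂) •
        ((((1 + α₁ • A) ⊗ₖ (1 + (I * α₂) • B)) * M * (((1 + α₁ • A) ⊗ₖ (1 + (I * α₂) • B)))ᴴ) +
          (((1 + (I * α₁) • A) ⊗ₖ (1 + α₂ • B)) * M * (((1 + (I * α₁) • A) ⊗ₖ (1 + α₂ • B)))ᴴ)) =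
      (8 * I) • (A ⊗ₖ B * M - M * A ⊗ₖ B) := by
  simp only [hA.conjTranspose_one_add_smul_kronecker hB]
  simp only [one_add_smul_kronecker_one_add_smul, Finset.sum_pair (show (1 : ℂ) ≠ -1 by norm_num),
    star_mul', Complex.star_def, conj_I]
  simp only [mul_add, add_mul, smul_mul_assoc, mul_smul_comm, smul_smul, mul_one, one_mul,
    smul_add, smul_sub]
  match_scalars
  all_goals grind [I_sq]

end Matrix

theorem stmt_6 (n m : ℕ)
    (A₁ : Matrix (Fin n) (Fin n) ℂ) (A₂ : Matrix (Fin m) (Fin m) ℂ)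
    (hA₁ : A₁ * A₁ = 1) (hA₂ : A₂ * A₂ = 1)
    (hH₁ : A₁.IsHermitian) (hH₂ : A₂.IsHermitian) (θ : ℝ)
    (M : Matrix (Fin n × Fin m) (Fin n × Fin m) ℂ) :
    let T : Matrix (Fin n × Fin m) (Fin n × Fin m) ℂ := A₁ ⊗ₖ A₂
    NormedSpace.exp ((Complex.I * (θ : ℂ)) • T) * M *
        NormedSpace.exp ((-(Complex.I * (θ : ℂ))) • T) =
      ((Real.cos θ : ℂ) ^ 2) • M + ((Real.sin θ : ℂ) ^ 2) • (T * M * T) +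
        (((Real.cos θ : ℂ) * (Real.sin θ : ℂ)) / 8) •
          ∑ α₁ ∈ ({1, -1} : Finset ℂ), ∑ α₂ ∈ ({1, -1} : Finset ℂ),
            (α₁ * α₂) •
              ((((1 + α₁ • A₁) ⊗ₖ (1 + (Complex.I * α₂) • A₂)) * M *
                  (((1 + α₁ • A₁) ⊗ₖ (1 + (Complex.I * α₂) • A₂)))ᴴ) +
                (((1 + (Complex.I * α₁) • A₁) ⊗ₖ (1 + α₂ • A₂)) * M *
                  (((1 + (Complex.I * α₁) • A₁) ⊗ₖ (1 + α₂ • A₂)))ᴴ)) := by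
  intro T
  have hT : T * T = 1 := by
    rw [← mul_kronecker_mul, hA₁, hA₂, one_kronecker_one]
  rw [conj_exp_I_mul_smul_of_mul_self_eq_one hT, hH₁.sum_sign_mul_kronecker_twirl hH₂,
    ofReal_cos, ofReal_sin, smul_smul (_ / 8)]
  match_scalars <;> ring
end

section
/- Let A₁ and A₂ be Hermitian 2×2 matrices with A₁² = I and A₂² = I, θ real, and U = exp(iθ A₁⊗A₂). Then for every 4×4 positive semidefinite ρ with Tr(ρ)=1 and every Hermitian 4×4 matrix O, Tr(O·UρU†) = cos²θ·Tr(Oρ) + sin²θ·Tr(O·(A₁⊗A₂)ρ(A₁⊗A₂)) + (cosθ·sinθ/8)·Σ_{α₁,α₂∈{±1}} α₁α₂·[ Tr(O·((I+α₁A₁)⊗(I+iα₂A₂))ρ((I+α₁A₁)⊗(I+iα₂A₂))†) + Tr(O·((I+iα₁A₁)⊗(I+α₂A₂))ρ((I+iα₁A₁)⊗(I+α₂A₂))†) ]. -/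
open Matrix Kronecker
open scoped ComplexOrder

/-! Since `T = A₁ ⊗ A₂` squares to `1`, `U = cos θ + i sin θ T`, so
`U ρ U† = cos²θ ρ + sin²θ T ρ T + i cos θ sin θ [T, ρ]`. The commutator is recovered from the
sign sums: weighting `((a + α₁ b) ⊗ (c + α₂ d)) ρ (…)†` by `α₁ α₂` and summing over the signs
kills every term not of degree one in both `b` and `d`. For the two families the surviving
mixed terms `(A₁ ⊗ 1) ρ (1 ⊗ A₂)` and `(1 ⊗ A₂) ρ (A₁ ⊗ 1)` come with opposite signs, which
leaves `8 i [T, ρ]`. -/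

theorem NormedSpace.exp_smul_of_mul_self_eq_one {𝔸 : Type*} [Ring 𝔸] [Algebra ℂ 𝔸]
    [TopologicalSpace 𝔸] [IsTopologicalRing 𝔸] [T2Space 𝔸] [ContinuousSMul ℂ 𝔸]
    {a : 𝔸} (ha : a * a = 1) (z : ℂ) :
    NormedSpace.exp (z • a) = Complex.cosh z • 1 + Complex.sinh z • a := by
  have ha_even (k : ℕ) : a ^ (2 * k) = 1 := by rw [pow_mul, sq, ha, one_pow]
  rw [NormedSpace.exp_eq_tsum ℂ]
  refine HasSum.tsum_eq (HasSum.even_add_odd ?_ ?_)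
  · convert (Complex.hasSum_cosh z).smul_const (1 : 𝔸) using 2 with k
    rw [smul_pow, ha_even, smul_smul, div_eq_inv_mul]
  · convert (Complex.hasSum_sinh z).smul_const a using 2 with k
    rw [smul_pow, pow_succ a, ha_even, one_mul, smul_smul, div_eq_inv_mul]

theorem NormedSpace.exp_I_mul_smul_of_mul_self_eq_one {𝔸 : Type*} [Ring 𝔸] [Algebra ℂ 𝔸]
    [TopologicalSpace 𝔸] [IsTopologicalRing 𝔸] [T2Space 𝔸] [ContinuousSMul ℂ 𝔸]
    {a : 𝔸} (ha : a * a = 1) (θ : ℝ) :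
    NormedSpace.exp ((Complex.I * θ) • a) =
      (Real.cos θ : ℂ) • 1 + (Complex.I * Real.sin θ) • a := by
  rw [NormedSpace.exp_smul_of_mul_self_eq_one ha, mul_comm, Complex.cosh_mul_I,
    Complex.sinh_mul_I, Complex.ofReal_cos, Complex.ofReal_sin, mul_comm]

namespace Matrix

theorem IsHermitian.kronecker {R m p : Type*} [CommRing R] [StarRing R] {A : Matrix m m R}
    {B : Matrix p p R} (hA : A.IsHermitian) (hB : B.IsHermitian) : (A ⊗ₖ B).IsHermitian := by
  rw [IsHermitian, conjTranspose_kronecker, hA.eq, hB.eq]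

theorem exp_I_mul_smul_mul_mul_conjTranspose {n : Type*} [Fintype n] [DecidableEq n]
    {T : Matrix n n ℂ} (hT : T.IsHermitian) (hT1 : T * T = 1) (θ : ℝ) (ρ : Matrix n n ℂ) :
    NormedSpace.exp ((Complex.I * θ) • T) * ρ * (NormedSpace.exp ((Complex.I * θ) • T))ᴴ =
      (Real.cos θ : ℂ) ^ 2 • ρ + (Real.sin θ : ℂ) ^ 2 • (T * ρ * T) +
      ((Real.cos θ : ℂ) * Real.sin θ) • (Complex.I • (T * ρ - ρ * T)) := by
  set U := NormedSpace.exp ((Complex.I * θ) • T)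
  have hU : U = (Real.cos θ : ℂ) • 1 + (Complex.I * Real.sin θ) • T :=
    NormedSpace.exp_I_mul_smul_of_mul_self_eq_one hT1 θ
  have hUH : Uᴴ = (Real.cos θ : ℂ) • 1 - (Complex.I * Real.sin θ) • T := by
    rw [hU, conjTranspose_add, conjTranspose_smul, conjTranspose_smul, conjTranspose_one, hT.eq]
    simp only [star_mul', Complex.star_def, Complex.conj_ofReal, Complex.conj_I, neg_mul, neg_smul,
      sub_eq_add_neg]
  rw [hUH, hU]
  simp only [Matrix.add_mul, Matrix.mul_sub, Matrix.smul_mul, Matrix.mul_smul, Matrix.one_mul,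
    Matrix.mul_one]
  match_scalars <;> ring_nf
  rw [Complex.I_sq]
  ring

theorem sum_sign_mul_sign_smul_kronecker_mul_mul_conjTranspose {m p : Type*}
    [Fintype m] [Fintype p]
    (a b : Matrix m m ℂ) (c d : Matrix p p ℂ) (ρ : Matrix (m × p) (m × p) ℂ) :
    ∑ α₁ ∈ ({1, -1} : Finset ℂ), ∑ α₂ ∈ ({1, -1} : Finset ℂ), (α₁ * α₂) •
      (((a + α₁ • b) ⊗ₖ (c + α₂ • d)) * ρ * ((a + α₁ • b) ⊗ₖ (c + α₂ • d))ᴴ) =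
      (4 : ℂ) • ((b ⊗ₖ d) * ρ * (a ⊗ₖ c)ᴴ + (a ⊗ₖ d) * ρ * (b ⊗ₖ c)ᴴ +
        (b ⊗ₖ c) * ρ * (a ⊗ₖ d)ᴴ + (a ⊗ₖ c) * ρ * (b ⊗ₖ d)ᴴ) := by
  simp only [Finset.sum_pair (show (1 : ℂ) ≠ -1 by norm_num), add_kronecker, kronecker_add,
    smul_kronecker, kronecker_smul, conjTranspose_add, conjTranspose_smul, star_one, star_neg,
    Matrix.add_mul, Matrix.mul_add, Matrix.smul_mul, Matrix.mul_smul, one_smul, neg_smul]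
  module

theorem sum_sign_mul_sign_smul_conj_add_conj_eq_commutator {m p : Type*}
    [Fintype m] [Fintype p] [DecidableEq m] [DecidableEq p] {A₁ : Matrix m m ℂ} {A₂ : Matrix p p ℂ}
    (hA₁ : A₁.IsHermitian) (hA₂ : A₂.IsHermitian) (ρ : Matrix (m × p) (m × p) ℂ) :
    ∑ α₁ ∈ ({1, -1} : Finset ℂ), ∑ α₂ ∈ ({1, -1} : Finset ℂ), (α₁ * α₂) •
      (((1 + α₁ • A₁) ⊗ₖ (1 + (Complex.I * α₂) • A₂)) * ρ *
          ((1 + α₁ • A₁) ⊗ₖ (1 + (Complex.I * α₂) • A₂))ᴴ +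
        ((1 + (Complex.I * α₁) • A₁) ⊗ₖ (1 + α₂ • A₂)) * ρ *
          ((1 + (Complex.I * α₁) • A₁) ⊗ₖ (1 + α₂ • A₂))ᴴ) =
      (8 : ℂ) • (Complex.I • ((A₁ ⊗ₖ A₂) * ρ - ρ * (A₁ ⊗ₖ A₂))) := by
  have hI₁ (α : ℂ) : (Complex.I * α) • A₁ = α • (Complex.I • A₁) := by rw [mul_comm, mul_smul]
  have hI₂ (α : ℂ) : (Complex.I * α) • A₂ = α • (Complex.I • A₂) := by rw [mul_comm, mul_smul]
  simp only [hI₁, hI₂, smul_add, Finset.sum_add_distrib,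
    sum_sign_mul_sign_smul_kronecker_mul_mul_conjTranspose]
  simp only [conjTranspose_kronecker, conjTranspose_smul, conjTranspose_one, hA₁.eq, hA₂.eq,
    Complex.star_def, Complex.conj_I, kronecker_smul, smul_kronecker, one_kronecker_one, Matrix.smul_mul, Matrix.mul_smul,
    Matrix.one_mul, Matrix.mul_one]
  module

end Matrix

theorem stmt_16_general (A₁ A₂ : Matrix (Fin 2) (Fin 2) ℂ)
    (hH₁ : A₁.IsHermitian) (hH₂ : A₂.IsHermitian)
    (hA₁ : A₁ * A₁ = 1) (hA₂ : A₂ * A₂ = 1) (θ : ℝ)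
    (ρ O : Matrix (Fin 2 × Fin 2) (Fin 2 × Fin 2) ℂ) :
    let T : Matrix (Fin 2 × Fin 2) (Fin 2 × Fin 2) ℂ := A₁ ⊗ₖ A₂
    let U := NormedSpace.exp ((Complex.I * (θ : ℂ)) • T)
    (O * (U * ρ * Uᴴ)).trace =
      ((Real.cos θ : ℂ) ^ 2) * (O * ρ).trace +
        ((Real.sin θ : ℂ) ^ 2) * (O * (T * ρ * T)).trace +
        (((Real.cos θ : ℂ) * (Real.sin θ : ℂ)) / 8) *
          ∑ α₁ ∈ ({1, -1} : Finset ℂ), ∑ α₂ ∈ ({1, -1} : Finset ℂ),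
            (α₁ * α₂) *
              ((O * (((1 + α₁ • A₁) ⊗ₖ (1 + (Complex.I * α₂) • A₂)) * ρ *
                  (((1 + α₁ • A₁) ⊗ₖ (1 + (Complex.I * α₂) • A₂)))ᴴ)).trace +
                (O * (((1 + (Complex.I * α₁) • A₁) ⊗ₖ (1 + α₂ • A₂)) * ρ *
                  (((1 + (Complex.I * α₁) • A₁) ⊗ₖ (1 + α₂ • A₂)))ᴴ)).trace) := by
  dsimp only
  have hT1 : (A₁ ⊗ₖ A₂) * (A₁ ⊗ₖ A₂) = 1 := by
    rw [← mul_kronecker_mul, hA₁, hA₂, one_kronecker_one]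
  have hS := sum_sign_mul_sign_smul_conj_add_conj_eq_commutator hH₁ hH₂ ρ
  rw [exp_I_mul_smul_mul_mul_conjTranspose (hH₁.kronecker hH₂) hT1,
    ← inv_smul_smul₀ (show (8 : ℂ) ≠ 0 by norm_num) (Complex.I • _), ← hS]
  simp only [Matrix.mul_add, Matrix.mul_smul, Matrix.mul_sum, trace_add, trace_smul, trace_sum,
    smul_eq_mul]
  ring

theorem stmt_16 (A₁ A₂ : Matrix (Fin 2) (Fin 2) ℂ)
    (hH₁ : A₁.IsHermitian) (hH₂ : A₂.IsHermitian)
    (hA₁ : A₁ * A₁ = 1) (hA₂ : A₂ * A₂ = 1) (θ : ℝ)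
    (ρ O : Matrix (Fin 2 × Fin 2) (Fin 2 × Fin 2) ℂ)
    (hρ : ρ.PosSemidef) (hρtr : ρ.trace = 1) (hO : O.IsHermitian) :
    let T : Matrix (Fin 2 × Fin 2) (Fin 2 × Fin 2) ℂ := A₁ ⊗ₖ A₂
    let U := NormedSpace.exp ((Complex.I * (θ : ℂ)) • T)
    (O * (U * ρ * Uᴴ)).trace =
      ((Real.cos θ : ℂ) ^ 2) * (O * ρ).trace +
        ((Real.sin θ : ℂ) ^ 2) * (O * (T * ρ * T)).trace +
        (((Real.cos θ : ℂ) * (Real.sin θ : ℂ)) / 8) *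
          ∑ α₁ ∈ ({1, -1} : Finset ℂ), ∑ α₂ ∈ ({1, -1} : Finset ℂ),
            (α₁ * α₂) *
              ((O * (((1 + α₁ • A₁) ⊗ₖ (1 + (Complex.I * α₂) • A₂)) * ρ *
                  (((1 + α₁ • A₁) ⊗ₖ (1 + (Complex.I * α₂) • A₂)))ᴴ)).trace +
                (O * (((1 + (Complex.I * α₁) • A₁) ⊗ₖ (1 + α₂ • A₂)) * ρ *
                  (((1 + (Complex.I * α₁) • A₁) ⊗ₖ (1 + α₂ • A₂)))ᴴ)).trace) :=
  stmt_16_general A₁ A₂ hH₁ hH₂ hA₁ hA₂ θ ρ O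
end
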